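/- arXiv:2404.13733 — 2 statements merged into one kernel-verified Lean document; each statement's English description precedes it below -/
import Mathlib

section
/- The differential entropy of a Gaussian mixture Q = Σ_j w_j N(μ_j, σ_j²) is upper bounded by the entropy of the single Gaussian P with the same mean and variance as Q, plus the correction term (1/2)[log(E_w[σ_j²] + Var_w[μ_j]) − E_w[log σ_j²]]; equivalently, H(P) − H(Q) ≤ (1/2)[log(Σ_j w_j σ_j² + Σ_j w_j μ_j² − (Σ_j w_j μ_j)²) − Σ_j w_j log σ_j²]. -/
/-!
The entropy of a Gaussian is `(log (2πv) + 1) / 2`, so `H(P)` is explicit. Concavity of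
`t ↦ -t log t` gives, pointwise, `-Q log Q ≥ ∑ w_j (-g_j log g_j)` for the component densities
`g_j`, hence `H(Q) ≥ ∑ w_j H(g_j)`, and subtracting yields the bound. The one analytic point is the
integrability of `-Q log Q`: it is squeezed between that lower bound and `Q · ∑ w_j (-log g_j)`
(concavity of `log`), which is a sum of Gaussian densities times quadratics.
-/

open Finset MeasureTheory Real ProbabilityTheory
open scoped NNReal

lemma MeasureTheory.Integrable.gaussianPDFReal_mul {m : ℝ} {v : ℝ≥0} {f : ℝ → ℝ}
    (hf : Integrable f (gaussianReal m v)) :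
    Integrable (fun x ↦ gaussianPDFReal m v x * f x) := by
  rcases eq_or_ne v 0 with rfl | hv
  · simp
  rw [gaussianReal_of_var_ne_zero _ hv, integrable_withDensity_iff_integrable_smul'
    (measurable_gaussianPDF m v) (ae_of_all _ fun _ ↦ gaussianPDF_lt_top)] at hf
  simpa [toReal_gaussianPDF] using hf

lemma integrable_sq_sub_gaussianReal (m c : ℝ) (v : ℝ≥0) :
    Integrable (fun x ↦ (x - c) ^ 2) (gaussianReal m v) :=
  ((memLp_id_gaussianReal 2).sub (memLp_const c)).integrable_sq

lemma integral_sq_sub_gaussianReal (m : ℝ) (v : ℝ≥0) :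
    ∫ x, (x - m) ^ 2 ∂gaussianReal m v = v := by
  rw [← variance_fun_id_gaussianReal (μ := m), variance_eq_integral measurable_id'.aemeasurable,
    integral_id_gaussianReal]

lemma neg_log_gaussianPDFReal (m : ℝ) {v : ℝ≥0} (hv : v ≠ 0) (x : ℝ) :
    -log (gaussianPDFReal m v x) = log (2 * π * v) / 2 + (x - m) ^ 2 / (2 * v) := by
  have : 0 < 2 * π * v := by positivity
  rw [gaussianPDFReal, log_mul (by positivity) (exp_pos _).ne', log_exp, log_inv,
    log_sqrt this.le]
  ring

lemma integrable_neg_log_gaussianPDFReal (m : ℝ) {v : ℝ≥0} (hv : v ≠ 0) (m' : ℝ) (v' : ℝ≥0) :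
    Integrable (fun x ↦ -log (gaussianPDFReal m v x)) (gaussianReal m' v') := by
  simp_rw [neg_log_gaussianPDFReal m hv]
  exact (integrable_const _).add ((integrable_sq_sub_gaussianReal m' m v').div_const _)

lemma integrable_negMulLog_gaussianPDFReal (m : ℝ) {v : ℝ≥0} (hv : v ≠ 0) :
    Integrable (fun x ↦ negMulLog (gaussianPDFReal m v x)) := by
  simpa [negMulLog] using (integrable_neg_log_gaussianPDFReal m hv m v).gaussianPDFReal_mul

noncomputable def diffEntropy (p : ℝ → ℝ) : ℝ := ∫ x, negMulLog (p x)

lemma diffEntropy_gaussianPDFReal (m : ℝ) {v : ℝ≥0} (hv : v ≠ 0) :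
    diffEntropy (gaussianPDFReal m v) = (log (2 * π * v) + 1) / 2 := by
  have hv' : (v : ℝ) ≠ 0 := by exact_mod_cast hv
  calc diffEntropy (gaussianPDFReal m v)
      = ∫ x, -log (gaussianPDFReal m v x) ∂gaussianReal m v := by
        simp [diffEntropy, negMulLog, integral_gaussianReal_eq_integral_smul hv]
    _ = ∫ x, (log (2 * π * v) / 2 + (x - m) ^ 2 / (2 * v)) ∂gaussianReal m v := by
        simp_rw [neg_log_gaussianPDFReal m hv]
    _ = log (2 * π * v) / 2 + v / (2 * v) := by
        rw [integral_add (integrable_const _) ((integrable_sq_sub_gaussianReal m m v).div_const _),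
          integral_const, integral_div, integral_sq_sub_gaussianReal]
        simp
    _ = (log (2 * π * v) + 1) / 2 := by field_simp

lemma sum_mul_negMulLog_le_negMulLog_sum {ι : Type*} [Fintype ι] {w p : ι → ℝ}
    (hw : ∀ i, 0 ≤ w i) (hsum : ∑ i, w i = 1) (hp : ∀ i, 0 ≤ p i) :
    ∑ i, w i * negMulLog (p i) ≤ negMulLog (∑ i, w i * p i) := by
  simpa using concaveOn_negMulLog.le_map_sum (fun i _ ↦ hw i) hsum
    (fun i _ ↦ Set.mem_Ici.2 (hp i))

lemma sum_mul_diffEntropy_le_diffEntropy_sum {ι : Type*} [Fintype ι] {w : ι → ℝ}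
    {p : ι → ℝ → ℝ} (hw : ∀ i, 0 ≤ w i) (hsum : ∑ i, w i = 1) (hp : ∀ i x, 0 ≤ p i x)
    (hint : ∀ i, Integrable (fun x ↦ negMulLog (p i x)))
    (hint_sum : Integrable (fun x ↦ negMulLog (∑ i, w i * p i x))) :
    ∑ i, w i * diffEntropy (p i) ≤ diffEntropy (fun x ↦ ∑ i, w i * p i x) := by
  simp_rw [diffEntropy, ← integral_const_mul]
  rw [← integral_finsetSum _ fun i _ ↦ (hint i).const_mul _]
  exact integral_mono (integrable_finsetSum _ fun i _ ↦ (hint i).const_mul _) hint_sum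
    fun x ↦ sum_mul_negMulLog_le_negMulLog_sum hw hsum fun i ↦ hp i x

noncomputable def gaussianMixturePDF {ι : Type*} [Fintype ι] (w m : ι → ℝ) (v : ι → ℝ≥0)
    (x : ℝ) : ℝ :=
  ∑ i, w i * gaussianPDFReal (m i) (v i) x

section GaussianMixture

variable {ι : Type*} [Fintype ι] {w : ι → ℝ} (m : ι → ℝ) {v : ι → ℝ≥0}

lemma negMulLog_gaussianMixturePDF_le (hw : ∀ i, 0 ≤ w i) (hsum : ∑ i, w i = 1)
    (hv : ∀ i, v i ≠ 0) (x : ℝ) :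
    negMulLog (gaussianMixturePDF w m v x) ≤
      gaussianMixturePDF w m v x * ∑ i, w i * -log (gaussianPDFReal (m i) (v i) x) := by
  have hlog : ∑ i, w i * log (gaussianPDFReal (m i) (v i) x) ≤
      log (gaussianMixturePDF w m v x) := by
    simpa [gaussianMixturePDF] using strictConcaveOn_log_Ioi.concaveOn.le_map_sum
      (fun i _ ↦ hw i) hsum (fun i _ ↦ Set.mem_Ioi.2 (gaussianPDFReal_pos _ _ x (hv i)))
  have hQ : 0 ≤ gaussianMixturePDF w m v x :=
    sum_nonneg fun i _ ↦ mul_nonneg (hw i) (gaussianPDFReal_nonneg _ _ x)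
  rw [negMulLog, neg_mul, ← mul_neg]
  refine mul_le_mul_of_nonneg_left ?_ hQ
  simpa [mul_neg, sum_neg_distrib] using hlog

lemma integrable_negMulLog_gaussianMixturePDF (hw : ∀ i, 0 ≤ w i) (hsum : ∑ i, w i = 1)
    (hv : ∀ i, v i ≠ 0) :
    Integrable (fun x ↦ negMulLog (gaussianMixturePDF w m v x)) := by
  set F : ℝ → ℝ := fun x ↦ ∑ i, w i * -log (gaussianPDFReal (m i) (v i) x)
  have hupper : Integrable (fun x ↦ gaussianMixturePDF w m v x * F x) := by
    simp_rw [gaussianMixturePDF, sum_mul, mul_assoc]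
    refine integrable_finsetSum _ fun j _ ↦ (Integrable.gaussianPDFReal_mul ?_).const_mul _
    exact integrable_finsetSum _ fun i _ ↦
      (integrable_neg_log_gaussianPDFReal (m i) (hv i) _ _).const_mul _
  have hlower : Integrable (fun x ↦ ∑ i, w i * negMulLog (gaussianPDFReal (m i) (v i) x)) :=
    integrable_finsetSum _ fun i _ ↦
      (integrable_negMulLog_gaussianPDFReal (m i) (hv i)).const_mul _
  refine integrable_of_le_of_le ?_ (ae_of_all _ fun x ↦ ?_)
    (ae_of_all _ (negMulLog_gaussianMixturePDF_le m hw hsum hv)) hlower hupper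
  · unfold gaussianMixturePDF
    fun_prop
  · exact sum_mul_negMulLog_le_negMulLog_sum hw hsum fun i ↦ gaussianPDFReal_nonneg _ _ x

lemma le_diffEntropy_gaussianMixturePDF (hw : ∀ i, 0 ≤ w i) (hsum : ∑ i, w i = 1)
    (hv : ∀ i, v i ≠ 0) :
    ∑ i, w i * ((log (2 * π * v i) + 1) / 2) ≤ diffEntropy (gaussianMixturePDF w m v) := by
  rw [sum_congr rfl fun i _ ↦ by rw [← diffEntropy_gaussianPDFReal (m i) (hv i)]]
  exact sum_mul_diffEntropy_le_diffEntropy_sum hw hsum (fun i x ↦ gaussianPDFReal_nonneg _ _ x)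
    (fun i ↦ integrable_negMulLog_gaussianPDFReal (m i) (hv i))
    (integrable_negMulLog_gaussianMixturePDF m hw hsum hv)

end GaussianMixture

section WeightedSums

variable {ι : Type*} [Fintype ι] {w : ι → ℝ}

lemma sum_mul_pos_of_sum_eq_one (hw : ∀ i, 0 ≤ w i) (hsum : ∑ i, w i = 1) {s : ι → ℝ}
    (hs : ∀ i, 0 < s i) : 0 < ∑ i, w i * s i := by
  obtain ⟨j, -, hj⟩ := exists_ne_zero_of_sum_ne_zero (hsum.trans_ne one_ne_zero)
  exact sum_pos' (fun i _ ↦ mul_nonneg (hw i) (hs i).le)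
    ⟨j, mem_univ j, mul_pos ((hw j).lt_of_ne' hj) (hs j)⟩

lemma sq_sum_mul_le_sum_mul_sq (hw : ∀ i, 0 ≤ w i) (hsum : ∑ i, w i = 1) (a : ι → ℝ) :
    (∑ i, w i * a i) ^ 2 ≤ ∑ i, w i * a i ^ 2 := by
  simpa using even_two.convexOn_pow.map_sum_le (fun i _ ↦ hw i) hsum
    (fun i _ ↦ Set.mem_univ (a i))

lemma sum_mul_log_two_pi_mul_add_one_div_two (hsum : ∑ i, w i = 1) {s : ι → ℝ}
    (hs : ∀ i, s i ≠ 0) :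
    ∑ i, w i * ((log (2 * π * s i) + 1) / 2) =
      (log (2 * π) + 1) / 2 + (∑ i, w i * log (s i)) / 2 := by
  have hterm : ∀ i, w i * ((log (2 * π * s i) + 1) / 2) =
      w i * ((log (2 * π) + 1) / 2) + (w i * log (s i)) / 2 := fun i ↦ by
    rw [log_mul (by positivity) (hs i)]
    ring
  rw [sum_congr rfl fun i _ ↦ hterm i, sum_add_distrib, ← sum_mul, ← sum_div, hsum, one_mul]

end WeightedSums

/-- Entropy upper bound for the moment-matched Gaussian vs. a Gaussian mixture:
H(P) − H(Q) ≤ (1/2)[log(E_w[σ_j²] + Var_w[μ_j]) − E_w[log σ_j²]]. -/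
theorem gmm_entropy_lower_bound {C : ℕ} (w μ σ2 : Fin C → ℝ)
    (hw : ∀ i, 0 ≤ w i) (hσ : ∀ i, 0 < σ2 i) (hsum : ∑ i, w i = 1) :
    let gauss : ℝ → ℝ → ℝ → ℝ := fun m s2 x =>
      (Real.sqrt (2 * Real.pi * s2))⁻¹ * Real.exp (-((x - m) ^ 2) / (2 * s2))
    let Q : ℝ → ℝ := fun x => ∑ i, w i * gauss (μ i) (σ2 i) x
    let mbar : ℝ := ∑ i, w i * μ i
    let s2bar : ℝ := ∑ i, w i * ((μ i) ^ 2 + σ2 i) - mbar ^ 2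
    let P : ℝ → ℝ := gauss mbar s2bar
    let H : (ℝ → ℝ) → ℝ := fun p => ∫ x, -(p x * Real.log (p x))
    H P - H Q ≤ (1 / 2) *
      (Real.log (∑ i, w i * σ2 i + (∑ i, w i * (μ i) ^ 2 - mbar ^ 2))
        - ∑ i, w i * Real.log (σ2 i)) := by
  intro gauss Q mbar s2bar P H
  have hgauss : ∀ m s, 0 ≤ s → gauss m s = gaussianPDFReal m s.toNNReal := fun m s hs ↦ by
    ext x
    simp [gauss, gaussianPDFReal, coe_toNNReal _ hs]
  have hH : ∀ p, H p = diffEntropy p := fun p ↦ by simp [H, diffEntropy, negMulLog]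
  have hvar : ∑ i, w i * σ2 i + (∑ i, w i * μ i ^ 2 - mbar ^ 2) = s2bar := by
    simp only [s2bar, mul_add, sum_add_distrib]
    ring
  have hs2bar : 0 < s2bar := hvar ▸ add_pos_of_pos_of_nonneg
    (sum_mul_pos_of_sum_eq_one hw hsum hσ) (sub_nonneg.2 (sq_sum_mul_le_sum_mul_sq hw hsum μ))
  have hHP : H P = (log (2 * π * s2bar) + 1) / 2 := by
    rw [hH, show P = _ from hgauss _ _ hs2bar.le,
      diffEntropy_gaussianPDFReal _ (by simpa using hs2bar), coe_toNNReal _ hs2bar.le]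
  have hHQ : ∑ i, w i * ((log (2 * π * σ2 i) + 1) / 2) ≤ H Q := by
    have hQ : Q = gaussianMixturePDF w μ (fun i ↦ (σ2 i).toNNReal) := by
      ext x
      simp [Q, gaussianMixturePDF, hgauss _ _ (hσ _).le]
    simpa [hH, hQ, coe_toNNReal _ (hσ _).le] using
      le_diffEntropy_gaussianMixturePDF μ (v := fun i ↦ (σ2 i).toNNReal) hw hsum
        (fun i ↦ by simpa using hσ i)
  rw [hvar, hHP, log_mul (by positivity) hs2bar.ne']
  rw [sum_mul_log_two_pi_mul_add_one_div_two hsum fun i ↦ (hσ i).ne'] at hHQ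
  linarith
end

section
/- Jensen gap for entropy of two-component Gaussian mixtures: for Q = w N(μ_1, σ²) + (1−w) N(μ_2, σ²) with equal component variances, H(Q) − H(N(μ̄, σ̄²)) where μ̄ = wμ_1 + (1−w)μ_2 and σ̄² = σ² + w(1−w)(μ_1−μ_2)², is bounded in absolute value by (1/4)·2w(1−w)·(μ_1−μ_2)²·(2σ²)/σ⁴ = w(1−w)(μ_1−μ_2)²/σ², plus the variance correction (1/2)[log σ̄² − log σ²]. -/
open MeasureTheory

open MeasureTheory Real

namespace GMMAux

lemma expform (s2 : ℝ) : ∀ y : ℝ, -(y ^ 2) / (2 * s2) = -(2 * s2)⁻¹ * y ^ 2 :=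
  fun y => by ring

lemma int_E {s2 : ℝ} (hs : 0 < s2) :
    Integrable (fun y : ℝ => Real.exp (-(y ^ 2) / (2 * s2))) := by
  simp_rw [expform s2]
  exact integrable_exp_neg_mul_sq (by positivity)

lemma int_yE {s2 : ℝ} (hs : 0 < s2) :
    Integrable (fun y : ℝ => y * Real.exp (-(y ^ 2) / (2 * s2))) := by
  simp_rw [expform s2]
  exact integrable_mul_exp_neg_mul_sq (by positivity)

lemma rpow2 : ∀ y : ℝ, y ^ (2 : ℝ) = y ^ 2 := fun y => by
  rw [show (2 : ℝ) = ((2 : ℕ) : ℝ) by norm_num, Real.rpow_natCast]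

lemma int_y2E {s2 : ℝ} (hs : 0 < s2) :
    Integrable (fun y : ℝ => y ^ 2 * Real.exp (-(y ^ 2) / (2 * s2))) := by
  have h := integrable_rpow_mul_exp_neg_mul_sq (b := (2 * s2)⁻¹) (by positivity)
    (s := 2) (by norm_num)
  simp_rw [rpow2] at h
  simp_rw [expform s2]
  exact h

lemma E0 {s2 : ℝ} (hs : 0 < s2) :
    ∫ y : ℝ, Real.exp (-(y ^ 2) / (2 * s2)) = Real.sqrt (2 * π * s2) := by
  simp_rw [expform s2]
  rw [integral_gaussian]
  congr 1
  field_simp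

lemma E1 (s2 : ℝ) : ∫ y : ℝ, y * Real.exp (-(y ^ 2) / (2 * s2)) = 0 := by
  have h := integral_neg_eq_self (fun y : ℝ => y * Real.exp (-(y ^ 2) / (2 * s2))) volume
  simp only [neg_sq, neg_mul] at h
  rw [integral_neg] at h
  linarith

lemma E2 {s2 : ℝ} (hs : 0 < s2) :
    ∫ y : ℝ, y ^ 2 * Real.exp (-(y ^ 2) / (2 * s2)) = s2 * Real.sqrt (2 * π * s2) := by
  have h1 : (∫ y : ℝ, y ^ 2 * Real.exp (-(y ^ 2) / (2 * s2)))
      = 2 * ∫ y in Set.Ioi (0:ℝ), y ^ 2 * Real.exp (-(y ^ 2) / (2 * s2)) := by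
    rw [← integral_comp_abs (f := fun t : ℝ => t ^ 2 * Real.exp (-(t ^ 2) / (2 * s2)))]
    simp_rw [sq_abs]
  have hb : (0:ℝ) < (2 * s2)⁻¹ := by positivity
  have h2 := integral_rpow_mul_exp_neg_mul_rpow (p := 2) (q := 2) (b := (2 * s2)⁻¹)
    (by norm_num) (by norm_num) hb
  simp_rw [rpow2] at h2
  have h3 : ∀ y : ℝ, -(2 * s2)⁻¹ * y ^ 2 = -(y ^ 2) / (2 * s2) := fun y => by ring
  simp_rw [h3] at h2
  rw [h1, h2]
  have hgam : Real.Gamma ((2 + 1) / 2) = Real.sqrt π / 2 := by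
    rw [show ((2:ℝ) + 1) / 2 = 1 / 2 + 1 by norm_num, Real.Gamma_add_one (by norm_num),
      Real.Gamma_one_half_eq]
    ring
  have h2s : (0:ℝ) < 2 * s2 := by positivity
  have hbpow : ((2 * s2)⁻¹ : ℝ) ^ (-((2:ℝ) + 1) / 2) = (2 * s2) * Real.sqrt (2 * s2) := by
    rw [Real.inv_rpow h2s.le, ← Real.rpow_neg h2s.le, neg_div, neg_neg,
      show ((2:ℝ) + 1) / 2 = 1 + 1 / 2 by norm_num, Real.rpow_add h2s, Real.rpow_one,
      ← Real.sqrt_eq_rpow]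
  rw [hgam, hbpow]
  have hsq : Real.sqrt (2 * s2) * Real.sqrt π = Real.sqrt (2 * π * s2) := by
    rw [← Real.sqrt_mul (by positivity : (0:ℝ) ≤ 2 * s2) π]
    congr 1; ring
  nlinarith [hsq, Real.sqrt_nonneg (2 * π * s2)]

/-- The gaussian density used in the theorem. -/
noncomputable def gd (m s2 x : ℝ) : ℝ :=
  (Real.sqrt (2 * Real.pi * s2))⁻¹ * Real.exp (-((x - m) ^ 2) / (2 * s2))

lemma sqrtc_pos {s2 : ℝ} (hs : 0 < s2) : 0 < Real.sqrt (2 * π * s2) :=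
  Real.sqrt_pos.mpr (by positivity)

lemma gd_pos {s2 : ℝ} (hs : 0 < s2) (m x : ℝ) : 0 < gd m s2 x :=
  mul_pos (inv_pos.mpr (sqrtc_pos hs)) (Real.exp_pos _)

lemma gd_cont (m s2 : ℝ) : Continuous (fun x => gd m s2 x) := by
  unfold gd; fun_prop

lemma gd_integrable {s2 : ℝ} (hs : 0 < s2) (m : ℝ) :
    Integrable (fun x : ℝ => gd m s2 x) :=
  ((int_E hs).comp_sub_right m).const_mul _

lemma gd_sq_integrable {s2 : ℝ} (hs : 0 < s2) (m a : ℝ) :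
    Integrable (fun x : ℝ => gd m s2 x * (x - a) ^ 2) := by
  have h : Integrable (fun x : ℝ =>
      (Real.sqrt (2 * π * s2))⁻¹ * ((x - m) ^ 2 * Real.exp (-((x - m) ^ 2) / (2 * s2))
        + ((2 * (m - a)) * ((x - m) * Real.exp (-((x - m) ^ 2) / (2 * s2)))
          + (m - a) ^ 2 * Real.exp (-((x - m) ^ 2) / (2 * s2))))) := by
    refine Integrable.const_mul ?_ _
    exact ((int_y2E hs).comp_sub_right m).add
      ((((int_yE hs).comp_sub_right m).const_mul (2 * (m - a))).add
        (((int_E hs).comp_sub_right m).const_mul ((m - a) ^ 2)))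
  refine h.congr (Filter.Eventually.of_forall fun x => ?_)
  unfold gd; ring

lemma gd_int_one {s2 : ℝ} (hs : 0 < s2) (m : ℝ) :
    ∫ x : ℝ, gd m s2 x = 1 := by
  unfold gd
  rw [MeasureTheory.integral_const_mul,
    show (∫ x : ℝ, Real.exp (-((x - m) ^ 2) / (2 * s2)))
        = ∫ y : ℝ, Real.exp (-(y ^ 2) / (2 * s2)) from
      integral_sub_right_eq_self (fun y : ℝ => Real.exp (-(y ^ 2) / (2 * s2))) m,
    E0 hs]
  exact inv_mul_cancel₀ (sqrtc_pos hs).ne'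

lemma gd_int_sq {s2 : ℝ} (hs : 0 < s2) (m a : ℝ) :
    ∫ x : ℝ, gd m s2 x * (x - a) ^ 2 = s2 + (m - a) ^ 2 := by
  have i1 : Integrable (fun x : ℝ => (x - m) ^ 2 * Real.exp (-((x - m) ^ 2) / (2 * s2))) :=
    (int_y2E hs).comp_sub_right m
  have i2 : Integrable (fun x : ℝ =>
      2 * (m - a) * ((x - m) * Real.exp (-((x - m) ^ 2) / (2 * s2)))) :=
    ((int_yE hs).comp_sub_right m).const_mul (2 * (m - a))
  have i3 : Integrable (fun x : ℝ => (m - a) ^ 2 * Real.exp (-((x - m) ^ 2) / (2 * s2))) :=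
    ((int_E hs).comp_sub_right m).const_mul ((m - a) ^ 2)
  have i23 : Integrable (fun x : ℝ =>
      2 * (m - a) * ((x - m) * Real.exp (-((x - m) ^ 2) / (2 * s2)))
        + (m - a) ^ 2 * Real.exp (-((x - m) ^ 2) / (2 * s2))) := i2.add i3
  have hrw : ∀ x : ℝ, gd m s2 x * (x - a) ^ 2
      = (Real.sqrt (2 * π * s2))⁻¹ * ((x - m) ^ 2 * Real.exp (-((x - m) ^ 2) / (2 * s2))
        + (2 * (m - a) * ((x - m) * Real.exp (-((x - m) ^ 2) / (2 * s2)))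
          + (m - a) ^ 2 * Real.exp (-((x - m) ^ 2) / (2 * s2)))) := by
    intro x; unfold gd; ring
  simp_rw [hrw]
  rw [MeasureTheory.integral_const_mul, integral_add i1 i23, integral_add i2 i3,
    MeasureTheory.integral_const_mul, MeasureTheory.integral_const_mul,
    show (∫ x : ℝ, (x - m) ^ 2 * Real.exp (-((x - m) ^ 2) / (2 * s2)))
        = ∫ y : ℝ, y ^ 2 * Real.exp (-(y ^ 2) / (2 * s2)) from
      integral_sub_right_eq_self (fun y : ℝ => y ^ 2 * Real.exp (-(y ^ 2) / (2 * s2))) m,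
    show (∫ x : ℝ, (x - m) * Real.exp (-((x - m) ^ 2) / (2 * s2)))
        = ∫ y : ℝ, y * Real.exp (-(y ^ 2) / (2 * s2)) from
      integral_sub_right_eq_self (fun y : ℝ => y * Real.exp (-(y ^ 2) / (2 * s2))) m,
    show (∫ x : ℝ, Real.exp (-((x - m) ^ 2) / (2 * s2)))
        = ∫ y : ℝ, Real.exp (-(y ^ 2) / (2 * s2)) from
      integral_sub_right_eq_self (fun y : ℝ => Real.exp (-(y ^ 2) / (2 * s2))) m,
    E0 hs, E1 s2, E2 hs]
  have hc := (sqrtc_pos hs).ne'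
  field_simp
  ring

lemma gd_log {s2 : ℝ} (hs : 0 < s2) (m x : ℝ) :
    Real.log (gd m s2 x)
      = -Real.log (Real.sqrt (2 * π * s2)) + -((x - m) ^ 2) / (2 * s2) := by
  unfold gd
  rw [Real.log_mul (inv_ne_zero (sqrtc_pos hs).ne') (Real.exp_ne_zero _),
    Real.log_inv, Real.log_exp]

lemma gd_plogp_integrable {s2 : ℝ} (hs : 0 < s2) (m : ℝ) :
    Integrable (fun x : ℝ => gd m s2 x * Real.log (gd m s2 x)) := by
  have h : Integrable (fun x : ℝ =>
      (-Real.log (Real.sqrt (2 * π * s2))) * gd m s2 x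
        + (-(2 * s2)⁻¹) * (gd m s2 x * (x - m) ^ 2)) :=
    ((gd_integrable hs m).const_mul _).add ((gd_sq_integrable hs m m).const_mul _)
  refine h.congr (Filter.Eventually.of_forall fun x => ?_)
  simp only [gd_log hs m]
  ring

lemma gd_entropy {s2 : ℝ} (hs : 0 < s2) (m : ℝ) :
    ∫ x : ℝ, -(gd m s2 x * Real.log (gd m s2 x))
      = (1 / 2) * Real.log (2 * π * s2) + 1 / 2 := by
  have i1 : Integrable (fun x : ℝ => Real.log (Real.sqrt (2 * π * s2)) * gd m s2 x) :=
    (gd_integrable hs m).const_mul _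
  have i2 : Integrable (fun x : ℝ => (2 * s2)⁻¹ * (gd m s2 x * (x - m) ^ 2)) :=
    (gd_sq_integrable hs m m).const_mul _
  have hrw : ∀ x : ℝ, -(gd m s2 x * Real.log (gd m s2 x))
      = Real.log (Real.sqrt (2 * π * s2)) * gd m s2 x
        + (2 * s2)⁻¹ * (gd m s2 x * (x - m) ^ 2) := by
    intro x
    rw [gd_log hs m x]
    ring
  simp_rw [hrw]
  rw [integral_add i1 i2, MeasureTheory.integral_const_mul, MeasureTheory.integral_const_mul,
    gd_int_one hs m, gd_int_sq hs m m, Real.log_sqrt (by positivity)]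
  field_simp
  ring

lemma mul_log_sub {a b : ℝ} (ha : 0 < a) (hb : 0 < b) :
    a - b ≤ a * Real.log a - a * Real.log b := by
  have h := Real.log_le_sub_one_of_pos (div_pos hb ha)
  rw [Real.log_div hb.ne' ha.ne'] at h
  have h2 := mul_le_mul_of_nonneg_left h ha.le
  rw [mul_sub] at h2
  have : a * (b / a - 1) = b - a := by field_simp
  linarith [h2, this ▸ h2]

lemma concave_ineq {w a₁ a₂ : ℝ} (hw0 : 0 ≤ w) (hw1 : w ≤ 1) (h1 : 0 < a₁) (h2 : 0 < a₂) :
    w * -(a₁ * Real.log a₁) + (1 - w) * -(a₂ * Real.log a₂)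
      ≤ -((w * a₁ + (1 - w) * a₂) * Real.log (w * a₁ + (1 - w) * a₂)) := by
  have hq : 0 < w * a₁ + (1 - w) * a₂ := by
    rcases le_total a₁ a₂ with h | h
    · nlinarith
    · nlinarith
  have k1 := mul_log_sub h1 hq
  have k2 := mul_log_sub h2 hq
  nlinarith [mul_le_mul_of_nonneg_left k1 hw0,
    mul_le_mul_of_nonneg_left k2 (by linarith : (0:ℝ) ≤ 1 - w)]

end GMMAux


open Real in
open GMMAux in
/-- Jensen gap for the entropy of a two-component Gaussian mixture with equal
component variances: the gap between H(Q) and the entropy of the moment-matched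
Gaussian N(μ̄, σ̄²), with μ̄ = wμ₁+(1−w)μ₂ and σ̄² = σ² + w(1−w)(μ₁−μ₂)², is bounded
in absolute value by w(1−w)(μ₁−μ₂)²/σ² plus the variance correction
(1/2)[log σ̄² − log σ²]. -/
theorem two_component_gmm_entropy_gap (w μ₁ μ₂ σ2 : ℝ)
    (hw0 : 0 < w) (hw1 : w < 1) (hσ : 0 < σ2) :
    let gauss : ℝ → ℝ → ℝ → ℝ := fun m s2 x =>
      (Real.sqrt (2 * Real.pi * s2))⁻¹ * Real.exp (-((x - m) ^ 2) / (2 * s2))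
    let Q : ℝ → ℝ := fun x => w * gauss μ₁ σ2 x + (1 - w) * gauss μ₂ σ2 x
    let mbar : ℝ := w * μ₁ + (1 - w) * μ₂
    let s2bar : ℝ := σ2 + w * (1 - w) * (μ₁ - μ₂) ^ 2
    let H : (ℝ → ℝ) → ℝ := fun p => ∫ x, -(p x * Real.log (p x))
    |H Q - H (gauss mbar s2bar)|
      ≤ w * (1 - w) * (μ₁ - μ₂) ^ 2 / σ2
        + (1 / 2) * (Real.log s2bar - Real.log σ2) := by
  intro gauss Q mbar s2bar H
  have hgauss : gauss = gd := rfl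
  have hQdef : Q = fun x => w * gd μ₁ σ2 x + (1 - w) * gd μ₂ σ2 x := rfl
  have hmbar : mbar = w * μ₁ + (1 - w) * μ₂ := rfl
  have hsbar : s2bar = σ2 + w * (1 - w) * (μ₁ - μ₂) ^ 2 := rfl
  have hH : H = fun p => ∫ x, -(p x * Real.log (p x)) := rfl
  simp only [hH, hQdef, hgauss, hmbar, hsbar]
  set M : ℝ := w * μ₁ + (1 - w) * μ₂ with hMdef
  set S : ℝ := σ2 + w * (1 - w) * (μ₁ - μ₂) ^ 2 with hSdef
  set QF : ℝ → ℝ := fun x => w * gd μ₁ σ2 x + (1 - w) * gd μ₂ σ2 x with hQF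
  clear_value M S QF
  have hw1' : 0 < 1 - w := by linarith
  have hσS : σ2 ≤ S := by
    rw [hSdef]
    nlinarith [mul_nonneg (mul_nonneg hw0.le (by linarith : (0:ℝ) ≤ 1 - w)) (sq_nonneg (μ₁ - μ₂))]
  have hS : 0 < S := lt_of_lt_of_le hσ hσS
  have hQpos : ∀ x, 0 < QF x := by
    intro x
    simp only [hQF]
    exact add_pos (mul_pos hw0 (gd_pos hσ μ₁ x)) (mul_pos hw1' (gd_pos hσ μ₂ x))
  -- integrability
  have iQ : MeasureTheory.Integrable QF := by
    rw [hQF]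
    exact ((gd_integrable hσ μ₁).const_mul w).add ((gd_integrable hσ μ₂).const_mul (1 - w))
  have iQsq : ∀ a : ℝ, MeasureTheory.Integrable (fun x => QF x * (x - a) ^ 2) := by
    intro a
    have h : MeasureTheory.Integrable (fun x =>
        w * (gd μ₁ σ2 x * (x - a) ^ 2) + (1 - w) * (gd μ₂ σ2 x * (x - a) ^ 2)) := by
      exact ((gd_sq_integrable hσ μ₁ a).const_mul w).add
        ((gd_sq_integrable hσ μ₂ a).const_mul (1 - w))
    refine h.congr (Filter.Eventually.of_forall fun x => ?_)
    simp only [hQF]; ring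
  have intQ : ∫ x, QF x = 1 := by
    simp only [hQF]
    rw [MeasureTheory.integral_add ((gd_integrable hσ μ₁).const_mul w)
        ((gd_integrable hσ μ₂).const_mul (1 - w)),
      MeasureTheory.integral_const_mul, MeasureTheory.integral_const_mul,
      gd_int_one hσ, gd_int_one hσ]
    ring
  have intQsq : ∫ x, QF x * (x - M) ^ 2 = S := by
    have hrw : ∀ x, QF x * (x - M) ^ 2
        = w * (gd μ₁ σ2 x * (x - M) ^ 2) + (1 - w) * (gd μ₂ σ2 x * (x - M) ^ 2) := by
      intro x; simp only [hQF]; ring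
    simp_rw [hrw]
    rw [MeasureTheory.integral_add ((gd_sq_integrable hσ μ₁ M).const_mul w)
        ((gd_sq_integrable hσ μ₂ M).const_mul (1 - w)),
      MeasureTheory.integral_const_mul, MeasureTheory.integral_const_mul,
      gd_int_sq hσ μ₁ M, gd_int_sq hσ μ₂ M, hMdef, hSdef]
    ring
  have iQlogG : MeasureTheory.Integrable (fun x => QF x * Real.log (gd M S x)) := by
    have h : MeasureTheory.Integrable (fun x =>
        -Real.log (Real.sqrt (2 * π * S)) * QF x + -(2 * S)⁻¹ * (QF x * (x - M) ^ 2)) := by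
      exact (iQ.const_mul _).add ((iQsq M).const_mul _)
    refine h.congr (Filter.Eventually.of_forall fun x => ?_)
    simp only [gd_log hS M]
    ring
  have contQ : Continuous QF := by
    have := gd_cont μ₁ σ2; have := gd_cont μ₂ σ2
    simp only [hQF]; fun_prop
  have iQlogQ : MeasureTheory.Integrable (fun x => QF x * Real.log (QF x)) := by
    set K := |Real.log (Real.sqrt (2 * π * σ2))| + |Real.log w| with hK
    have hmaj : MeasureTheory.Integrable
        (fun x => K * QF x + (2 * σ2)⁻¹ * (QF x * (x - μ₁) ^ 2)) :=
      (iQ.const_mul K).add ((iQsq μ₁).const_mul _)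
    refine hmaj.mono' ((contQ.mul (contQ.log fun x => (hQpos x).ne')).aestronglyMeasurable)
      (Filter.Eventually.of_forall fun x => ?_)
    have hcσ := sqrtc_pos hσ
    have hub : QF x ≤ (Real.sqrt (2 * π * σ2))⁻¹ := by
      have h1 : gd μ₁ σ2 x ≤ (Real.sqrt (2 * π * σ2))⁻¹ := by
        have he : Real.exp (-((x - μ₁) ^ 2) / (2 * σ2)) ≤ 1 :=
          Real.exp_le_one_iff.mpr
            (div_nonpos_of_nonpos_of_nonneg (neg_nonpos.mpr (sq_nonneg _)) (by positivity))
        calc gd μ₁ σ2 x = (Real.sqrt (2 * π * σ2))⁻¹ * Real.exp (-((x - μ₁) ^ 2) / (2 * σ2)) := rfl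
          _ ≤ (Real.sqrt (2 * π * σ2))⁻¹ * 1 := by
              exact mul_le_mul_of_nonneg_left he (by positivity)
          _ = (Real.sqrt (2 * π * σ2))⁻¹ := mul_one _
      have h2 : gd μ₂ σ2 x ≤ (Real.sqrt (2 * π * σ2))⁻¹ := by
        have he : Real.exp (-((x - μ₂) ^ 2) / (2 * σ2)) ≤ 1 :=
          Real.exp_le_one_iff.mpr
            (div_nonpos_of_nonpos_of_nonneg (neg_nonpos.mpr (sq_nonneg _)) (by positivity))
        calc gd μ₂ σ2 x = (Real.sqrt (2 * π * σ2))⁻¹ * Real.exp (-((x - μ₂) ^ 2) / (2 * σ2)) := rfl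
          _ ≤ (Real.sqrt (2 * π * σ2))⁻¹ * 1 := by
              exact mul_le_mul_of_nonneg_left he (by positivity)
          _ = (Real.sqrt (2 * π * σ2))⁻¹ := mul_one _
      calc QF x = w * gd μ₁ σ2 x + (1 - w) * gd μ₂ σ2 x := by rw [hQF]
        _ ≤ w * (Real.sqrt (2 * π * σ2))⁻¹ + (1 - w) * (Real.sqrt (2 * π * σ2))⁻¹ := by
            exact add_le_add (mul_le_mul_of_nonneg_left h1 hw0.le)
              (mul_le_mul_of_nonneg_left h2 hw1'.le)
        _ = (Real.sqrt (2 * π * σ2))⁻¹ := by ring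
    have hlogub : Real.log (QF x) ≤ |Real.log (Real.sqrt (2 * π * σ2))| := by
      calc Real.log (QF x) ≤ Real.log ((Real.sqrt (2 * π * σ2))⁻¹) :=
            Real.log_le_log (hQpos x) hub
        _ = -Real.log (Real.sqrt (2 * π * σ2)) := Real.log_inv _
        _ ≤ |Real.log (Real.sqrt (2 * π * σ2))| := neg_le_abs _
    have hlb : w * gd μ₁ σ2 x ≤ QF x := by
      have : 0 ≤ (1 - w) * gd μ₂ σ2 x := le_of_lt (mul_pos hw1' (gd_pos hσ μ₂ x))
      calc w * gd μ₁ σ2 x ≤ w * gd μ₁ σ2 x + (1 - w) * gd μ₂ σ2 x := by linarith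
        _ = QF x := (hQF ▸ rfl)
    have hloglb : Real.log w + (-Real.log (Real.sqrt (2 * π * σ2))
        + -((x - μ₁) ^ 2) / (2 * σ2)) ≤ Real.log (QF x) := by
      calc Real.log w + (-Real.log (Real.sqrt (2 * π * σ2)) + -((x - μ₁) ^ 2) / (2 * σ2))
          = Real.log (w * gd μ₁ σ2 x) := by
            rw [Real.log_mul hw0.ne' (gd_pos hσ μ₁ x).ne', gd_log hσ μ₁ x]
        _ ≤ Real.log (QF x) := Real.log_le_log (mul_pos hw0 (gd_pos hσ μ₁ x)) hlb
    have habs : |Real.log (QF x)| ≤ K + (2 * σ2)⁻¹ * (x - μ₁) ^ 2 := by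
      rw [abs_le]
      constructor
      · have h1 : -|Real.log w| ≤ Real.log w := neg_abs_le _
        have h2 : -|Real.log (Real.sqrt (2 * π * σ2))| ≤ -Real.log (Real.sqrt (2 * π * σ2)) :=
          neg_le_neg (le_abs_self _)
        have h3 : -((x - μ₁) ^ 2) / (2 * σ2) = -((2 * σ2)⁻¹ * (x - μ₁) ^ 2) := by ring
        rw [hK]
        rw [h3] at hloglb
        linarith
      · have : (0:ℝ) ≤ (2 * σ2)⁻¹ * (x - μ₁) ^ 2 := by positivity
        rw [hK]
        have h4 : (0:ℝ) ≤ |Real.log w| := abs_nonneg _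
        linarith
    have hQnn : 0 ≤ QF x := (hQpos x).le
    calc ‖QF x * Real.log (QF x)‖ = QF x * |Real.log (QF x)| := by
          rw [norm_mul, Real.norm_eq_abs, Real.norm_eq_abs, abs_of_pos (hQpos x)]
      _ ≤ QF x * (K + (2 * σ2)⁻¹ * (x - μ₁) ^ 2) := mul_le_mul_of_nonneg_left habs hQnn
      _ = K * QF x + (2 * σ2)⁻¹ * (QF x * (x - μ₁) ^ 2) := by ring
  -- value of ∫ -(QF log g)
  have intNegQlogG : ∫ x, -(QF x * Real.log (gd M S x))
      = (1 / 2) * Real.log (2 * π * S) + 1 / 2 := by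
    have hrw : ∀ x, -(QF x * Real.log (gd M S x))
        = Real.log (Real.sqrt (2 * π * S)) * QF x + (2 * S)⁻¹ * (QF x * (x - M) ^ 2) := by
      intro x; rw [gd_log hS M x]; ring
    simp_rw [hrw]
    rw [MeasureTheory.integral_add (iQ.const_mul _) ((iQsq M).const_mul _),
      MeasureTheory.integral_const_mul, MeasureTheory.integral_const_mul, intQ, intQsq,
      Real.log_sqrt (by positivity)]
    field_simp
  -- upper bound
  have HQ_le : (∫ x, -(QF x * Real.log (QF x))) ≤ (1 / 2) * Real.log (2 * π * S) + 1 / 2 := by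
    have step1 : (∫ x, -(QF x * Real.log (QF x)))
        ≤ ∫ x, (-(QF x * Real.log (gd M S x)) + (gd M S x - QF x)) := by
      have iR : MeasureTheory.Integrable
          (fun x => -(QF x * Real.log (gd M S x)) + (gd M S x - QF x)) := by
        exact iQlogG.neg.add ((gd_integrable hS M).sub iQ)
      have iL : MeasureTheory.Integrable (fun x => -(QF x * Real.log (QF x))) := by
        exact iQlogQ.neg
      refine MeasureTheory.integral_mono iL iR fun x => ?_
      have h := mul_log_sub (hQpos x) (gd_pos hS M x)
      show -(QF x * Real.log (QF x)) ≤ -(QF x * Real.log (gd M S x)) + (gd M S x - QF x)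
      linarith
    have step2 : (∫ x, (-(QF x * Real.log (gd M S x)) + (gd M S x - QF x)))
        = (1 / 2) * Real.log (2 * π * S) + 1 / 2 := by
      have iA : MeasureTheory.Integrable (fun x => -(QF x * Real.log (gd M S x))) := by
        exact iQlogG.neg
      have iB : MeasureTheory.Integrable (fun x => gd M S x - QF x) := by
        exact (gd_integrable hS M).sub iQ
      rw [MeasureTheory.integral_add iA iB,
        MeasureTheory.integral_sub (gd_integrable hS M) iQ, gd_int_one hS M, intQ]
      have : (∫ x, -(QF x * Real.log (gd M S x))) = (1 / 2) * Real.log (2 * π * S) + 1 / 2 :=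
        intNegQlogG
      rw [this]; ring
    linarith
  -- lower bound
  have iL1 : MeasureTheory.Integrable
      (fun x => w * -(gd μ₁ σ2 x * Real.log (gd μ₁ σ2 x))) := by
    exact ((gd_plogp_integrable hσ μ₁).neg).const_mul w
  have iL2 : MeasureTheory.Integrable
      (fun x => (1 - w) * -(gd μ₂ σ2 x * Real.log (gd μ₂ σ2 x))) := by
    exact ((gd_plogp_integrable hσ μ₂).neg).const_mul (1 - w)
  have HQ_ge : (1 / 2) * Real.log (2 * π * σ2) + 1 / 2 ≤ ∫ x, -(QF x * Real.log (QF x)) := by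
    have step : (∫ x, (w * -(gd μ₁ σ2 x * Real.log (gd μ₁ σ2 x))
          + (1 - w) * -(gd μ₂ σ2 x * Real.log (gd μ₂ σ2 x))))
        ≤ ∫ x, -(QF x * Real.log (QF x)) := by
      have iSum : MeasureTheory.Integrable
          (fun x => w * -(gd μ₁ σ2 x * Real.log (gd μ₁ σ2 x))
            + (1 - w) * -(gd μ₂ σ2 x * Real.log (gd μ₂ σ2 x))) := by
        exact iL1.add iL2
      have iNegQ : MeasureTheory.Integrable (fun x => -(QF x * Real.log (QF x))) := by
        exact iQlogQ.neg
      refine MeasureTheory.integral_mono iSum iNegQ fun x => ?_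
      show w * -(gd μ₁ σ2 x * Real.log (gd μ₁ σ2 x))
          + (1 - w) * -(gd μ₂ σ2 x * Real.log (gd μ₂ σ2 x)) ≤ -(QF x * Real.log (QF x))
      simp only [hQF]
      exact concave_ineq hw0.le hw1.le (gd_pos hσ μ₁ x) (gd_pos hσ μ₂ x)
    have val : (∫ x, (w * -(gd μ₁ σ2 x * Real.log (gd μ₁ σ2 x))
          + (1 - w) * -(gd μ₂ σ2 x * Real.log (gd μ₂ σ2 x))))
        = (1 / 2) * Real.log (2 * π * σ2) + 1 / 2 := by
      rw [MeasureTheory.integral_add iL1 iL2, MeasureTheory.integral_const_mul,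
        MeasureTheory.integral_const_mul]
      have e1 : (∫ x, -(gd μ₁ σ2 x * Real.log (gd μ₁ σ2 x)))
          = (1 / 2) * Real.log (2 * π * σ2) + 1 / 2 := gd_entropy hσ μ₁
      have e2 : (∫ x, -(gd μ₂ σ2 x * Real.log (gd μ₂ σ2 x)))
          = (1 / 2) * Real.log (2 * π * σ2) + 1 / 2 := gd_entropy hσ μ₂
      rw [e1, e2]; ring
    linarith
  have Hg : (∫ x, -(gd M S x * Real.log (gd M S x)))
      = (1 / 2) * Real.log (2 * π * S) + 1 / 2 := gd_entropy hS M
  have hlogid : Real.log (2 * π * S) - Real.log (2 * π * σ2) = Real.log S - Real.log σ2 := by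
    rw [Real.log_mul (by positivity : (2 * π : ℝ) ≠ 0) hS.ne',
      Real.log_mul (by positivity : (2 * π : ℝ) ≠ 0) hσ.ne']
    ring
  have hlognn : 0 ≤ Real.log S - Real.log σ2 :=
    sub_nonneg.mpr (Real.log_le_log hσ hσS)
  have hR1 : 0 ≤ w * (1 - w) * (μ₁ - μ₂) ^ 2 / σ2 := by positivity
  have hgoal : (∫ x, -((w * gd μ₁ σ2 x + (1 - w) * gd μ₂ σ2 x)
        * Real.log (w * gd μ₁ σ2 x + (1 - w) * gd μ₂ σ2 x)))
      = ∫ x, -(QF x * Real.log (QF x)) := by simp only [hQF]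
  rw [hgoal, Hg, abs_le]
  constructor
  · linarith
  · linarith
end
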